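/- Let P_v be a simple polygon and let D_v be a finite set of maximal directed segments in P_v, where each segment with endpoints a, b on the boundary is directed from a to b according to the counterclockwise order of a and b along the boundary starting from a fixed boundary point v. Define a directed graph G whose vertices are the directed segments, with an edge from segment s1 = ab to segment s2 = bc whenever the terminal point of s1 equals the initial point of s2 and the turn from ab to bc is a left turn (angle at most 180°). Then G is a directed acyclic graph. -/
import Mathlib


open Set

/-- The planar cross product (signed area), used to express left turns. -/
def cross (u v : ℝ × ℝ) : ℝ := u.1 * v.2 - u.2 * v.1

/-- Let `P_v` be a simple polygon with boundary parametrized counterclockwise by `γ`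
(periodic with period 1, injective on `[0,1)`, image the frontier of `P`), with
distinguished boundary point `v = γ 0`. Let `S` be a finite set of maximal directed
segments in `P`, where the element `(s, t) ∈ S` with `0 ≤ s < t < 1` represents the
segment from `γ s` to `γ t` (directed according to the counterclockwise boundary order
starting at `v`), contained in `P` with both endpoints on the boundary. Form the
directed graph on `S` with an edge from `p` to `q` whenever the terminal point of `p`
equals the initial point of `q` and the turn is a left turn (angle at most 180°,
i.e. nonnegative cross product). Then this graph is acyclic. -/
theorem stmt2 (P : Set (ℝ × ℝ)) (γ : ℝ → ℝ × ℝ)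
    (hγcont : Continuous γ) (hγper : Function.Periodic γ 1)
    (hγinj : Set.InjOn γ (Set.Ico 0 1))
    (hfr : frontier P = γ '' Set.Ico 0 1)
    (v : ℝ × ℝ) (hv : v = γ 0)
    (S : Finset (ℝ × ℝ))
    (hS : ∀ p ∈ S, 0 ≤ p.1 ∧ p.1 < p.2 ∧ p.2 < 1 ∧
      segment ℝ (γ p.1) (γ p.2) ⊆ P) :
    ∀ p : ℝ × ℝ,
      ¬ Relation.TransGen
          (fun p q => p ∈ S ∧ q ∈ S ∧ γ p.2 = γ q.1 ∧
            0 ≤ cross (γ p.2 - γ p.1) (γ q.2 - γ q.1)) p p := by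
  intro p hp
  have key : ∀ a b : ℝ × ℝ,
      Relation.TransGen
        (fun p q => p ∈ S ∧ q ∈ S ∧ γ p.2 = γ q.1 ∧
          0 ≤ cross (γ p.2 - γ p.1) (γ q.2 - γ q.1)) a b → a.2 < b.2 := by
    intro a b h
    induction h with
    | @single c h' =>
      obtain ⟨ha, hc, heq, -⟩ := h'
      obtain ⟨ha1, ha2, ha3, -⟩ := hS _ ha
      obtain ⟨hc1, hc2, hc3, -⟩ := hS _ hc
      have : a.2 = c.1 := hγinj ⟨le_trans ha1 ha2.le, ha3⟩ ⟨hc1, lt_trans hc2 hc3⟩ heq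
      linarith
    | @tail c d h h' ih =>
      obtain ⟨hc, hd, heq, -⟩ := h'
      obtain ⟨hc1, hc2, hc3, -⟩ := hS _ hc
      obtain ⟨hd1, hd2, hd3, -⟩ := hS _ hd
      have : c.2 = d.1 := hγinj ⟨le_trans hc1 hc2.le, hc3⟩ ⟨hd1, lt_trans hd2 hd3⟩ heq
      linarith
  exact lt_irrefl _ (key p p hp)
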